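/- arXiv:1707.03181 — 2 statements merged into one kernel-verified Lean document; each statement's English description precedes it below -/
import Mathlib

section
/- The hexagonal lattice spanned by 1 and e^{iπ/3} in ℂ ≅ ℝ², rescaled to covolume 1, has strictly larger systole than any non-hexagonal covolume-1 lattice in ℝ²; equivalently, every covolume-1 lattice Λ ⊂ ℝ² satisfies syst(Λ) ≤ (2/√3)^{1/2}, with equality iff Λ is the image of the rescaled hexagonal lattice under an isometry of ℝ². -/
open Complex

/-- The lattice in ℂ ≅ ℝ² generated by `a` and `b`. -/
noncomputable def latticeOf (a b : ℂ) : AddSubgroup ℂ := AddSubgroup.closure {a, b}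

/-- The covolume of the lattice generated by `a` and `b`:
the area of the fundamental parallelogram. -/
noncomputable def covol (a b : ℂ) : ℝ := |((starRingEnd ℂ) a * b).im|

/-- The systole of a lattice in ℂ: the infimum of the norms of its
nonzero elements. -/
noncomputable def systole (L : AddSubgroup ℂ) : ℝ :=
  sInf {r | ∃ v ∈ L, v ≠ 0 ∧ ‖v‖ = r}

/-- A minimal vector of a lattice: a nonzero vector realizing the systole. -/
def IsMinimalVector (L : AddSubgroup ℂ) (v : ℂ) : Prop :=
  v ∈ L ∧ v ≠ 0 ∧ ‖v‖ = systole L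

/-- The scaling factor (2/√3)^{1/2} making the hexagonal lattice have
covolume one. -/
noncomputable def c₀ : ℝ := Real.sqrt (2 / Real.sqrt 3)

/-- The hexagonal lattice `ℤ + ℤ e^{iπ/3}` rescaled to covolume one. -/
noncomputable def hexLattice : AddSubgroup ℂ :=
  latticeOf c₀ (c₀ * Complex.exp (Real.pi / 3 * Complex.I))

/-- A lattice in ℂ ≅ ℝ² is hexagonal if it is the image of the rescaled
hexagonal lattice under a (linear) isometry of ℝ². -/
def IsHexagonal (L : AddSubgroup ℂ) : Prop :=
  ∃ f : ℂ ≃ₗᵢ[ℝ] ℂ, (L : Set ℂ) = f '' (hexLattice : Set ℂ)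

/-!
Take a minimal vector `u` of the lattice. It is primitive, so it extends to a basis `(u, u τ)`,
and subtracting an integer multiple of `u` we may assume `|Re τ| ≤ 1/2`; minimality of `u` then
gives `|τ| ≥ 1`, so `τ` lies in the closed fundamental domain of the modular group and
`(Im τ)² ≥ 3/4`. As the covolume is `‖u‖² |Im τ| = 1`, this gives `‖u‖⁴ ≤ 4/3 = c₀⁴`.
Equality forces `τ = ±1/2 ± i√3/2`, so the lattice is `u (ℤ + ℤ e^{iπ/3})`, the rotation of the
hexagonal lattice by `u / c₀`.
-/

open ComplexConjugate

section Lattice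

variable {a b u w : ℂ}

lemma mem_latticeOf {v : ℂ} : v ∈ latticeOf a b ↔ ∃ m n : ℤ, (m : ℂ) * a + n * b = v := by
  simp only [latticeOf, AddSubgroup.mem_closure_pair, zsmul_eq_mul]

lemma latticeOf_le_iff {L : AddSubgroup ℂ} : latticeOf a b ≤ L ↔ a ∈ L ∧ b ∈ L := by
  rw [latticeOf, AddSubgroup.closure_le, Set.insert_subset_iff, Set.singleton_subset_iff]
  rfl

lemma latticeOf_eq_of_isUnit_det {p q r s : ℤ} (hu : u = p * a + q * b) (hw : w = r * a + s * b)
    (hdet : IsUnit (p * s - q * r)) : latticeOf u w = latticeOf a b := by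
  set ε := p * s - q * r with hε
  have hεε : (ε : ℂ) * ε = 1 := by exact_mod_cast Int.isUnit_mul_self hdet
  have hεC : (ε : ℂ) = p * s - q * r := by rw [hε]; push_cast; ring
  refine le_antisymm (latticeOf_le_iff.2 ⟨mem_latticeOf.2 ⟨p, q, hu.symm⟩,
    mem_latticeOf.2 ⟨r, s, hw.symm⟩⟩) (latticeOf_le_iff.2 ⟨mem_latticeOf.2 ⟨ε * s, -ε * q, ?_⟩,
    mem_latticeOf.2 ⟨-ε * r, ε * p, ?_⟩⟩)
  · rw [hu, hw]; push_cast
    linear_combination a * hεε - ε * a * hεC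
  · rw [hu, hw]; push_cast
    linear_combination b * hεε - ε * b * hεC

lemma latticeOf_map (f : ℂ →+ ℂ) : (latticeOf a b).map f = latticeOf (f a) (f b) := by
  rw [latticeOf, latticeOf, AddMonoidHom.map_closure, Set.image_pair]

lemma covol_intCast_mul_add (p q r s : ℤ) :
    covol (p * a + q * b) (r * a + s * b) = |((p * s - q * r : ℤ) : ℝ)| * covol a b := by
  simp only [covol, ← abs_mul]
  congr 1
  simp only [map_add, map_mul, map_intCast, Complex.mul_im, Complex.mul_re, Complex.add_re,
    Complex.add_im, Complex.intCast_re, Complex.intCast_im, Complex.conj_re, Complex.conj_im]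
  push_cast
  ring

lemma covol_mul_right (u τ : ℂ) : covol u (u * τ) = ‖u‖ ^ 2 * |τ.im| := by
  rw [covol, ← mul_assoc, Complex.conj_mul', ← Complex.ofReal_pow, Complex.im_ofReal_mul,
    abs_mul, abs_of_nonneg (by positivity)]

lemma covol_le_norm_mul_norm (u w : ℂ) : covol u w ≤ ‖u‖ * ‖w‖ :=
  (Complex.abs_im_le_norm (conj u * w)).trans_eq (by rw [norm_mul, Complex.norm_conj])

lemma abs_intCast_mul_covol_le (m n : ℤ) :
    |(n : ℝ)| * covol a b ≤ ‖a‖ * ‖(m : ℂ) * a + n * b‖ ∧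
      |(m : ℝ)| * covol a b ≤ ‖b‖ * ‖(m : ℂ) * a + n * b‖ := by
  have h₁ : covol a (m * a + n * b) = |(n : ℝ)| * covol a b := by
    simpa using covol_intCast_mul_add (a := a) (b := b) 1 0 m n
  have h₂ : covol b (m * a + n * b) = |(m : ℝ)| * covol a b := by
    simpa using covol_intCast_mul_add (a := a) (b := b) 0 1 m n
  exact ⟨h₁ ▸ covol_le_norm_mul_norm _ _, h₂ ▸ covol_le_norm_mul_norm _ _⟩

lemma eq_zero_of_intCast_mul_add_eq_zero (h : covol a b ≠ 0) {m n : ℤ}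
    (hmn : (m : ℂ) * a + n * b = 0) : m = 0 ∧ n = 0 := by
  have hcov : 0 < covol a b := (abs_nonneg _).lt_of_ne' h
  obtain ⟨hn, hm⟩ := abs_intCast_mul_covol_le (a := a) (b := b) m n
  rw [hmn, norm_zero, mul_zero] at hn hm
  have eq_zero {k : ℤ} (hk : |(k : ℝ)| * covol a b ≤ 0) : k = 0 := by
    have : |(k : ℝ)| = 0 := by nlinarith [abs_nonneg (k : ℝ)]
    exact_mod_cast abs_eq_zero.1 this
  exact ⟨eq_zero hm, eq_zero hn⟩

lemma finite_setOf_norm_intCast_mul_add_le (h : covol a b ≠ 0) (R : ℝ) :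
    {p : ℤ × ℤ | ‖(p.1 : ℂ) * a + p.2 * b‖ ≤ R}.Finite := by
  have hcov : 0 < covol a b := (abs_nonneg _).lt_of_ne' h
  refine (isCompact_closedBall (0 : ℤ × ℤ) ((‖a‖ + ‖b‖) * R / covol a b)).finite_of_discrete.subset
    fun ⟨m, n⟩ hR => ?_
  have hR0 : 0 ≤ R := (norm_nonneg _).trans hR
  obtain ⟨hn, hm⟩ := abs_intCast_mul_covol_le (a := a) (b := b) m n
  have ha := mul_le_mul_of_nonneg_left hR (norm_nonneg a)
  have hb := mul_le_mul_of_nonneg_left hR (norm_nonneg b)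
  rw [Metric.mem_closedBall, dist_zero_right, Prod.norm_def, max_le_iff, Int.norm_eq_abs,
    Int.norm_eq_abs, le_div_iff₀ hcov, le_div_iff₀ hcov]
  constructor <;> nlinarith [mul_nonneg (norm_nonneg a) hR0, mul_nonneg (norm_nonneg b) hR0]

end Lattice

section Systole

variable {L : AddSubgroup ℂ} {v : ℂ}

lemma systole_le_norm (hv : v ∈ L) (hv0 : v ≠ 0) : systole L ≤ ‖v‖ :=
  csInf_le ⟨0, by rintro r ⟨w, -, -, rfl⟩; exact norm_nonneg w⟩ ⟨v, hv, hv0, rfl⟩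

lemma isMinimalVector_iff :
    IsMinimalVector L v ↔ v ∈ L ∧ v ≠ 0 ∧ ∀ w ∈ L, w ≠ 0 → ‖v‖ ≤ ‖w‖ := by
  refine ⟨fun ⟨hv, hv0, hsys⟩ => ⟨hv, hv0, fun w hw hw0 => hsys ▸ systole_le_norm hw hw0⟩,
    fun ⟨hv, hv0, hmin⟩ => ⟨hv, hv0, le_antisymm ?_ (systole_le_norm hv hv0)⟩⟩
  exact le_csInf ⟨_, v, hv, hv0, rfl⟩ (by rintro r ⟨w, hw, hw0, rfl⟩; exact hmin w hw hw0)

lemma systole_eq_sInf_image : systole L = sInf (norm '' ((L : Set ℂ) \ {0})) := by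
  simp only [systole]
  congr 1
  ext r
  simp [and_assoc]

lemma systole_eq_of_coe_eq_image {L' : AddSubgroup ℂ} (f : ℂ ≃ₗᵢ[ℝ] ℂ)
    (h : (L : Set ℂ) = f '' L') : systole L = systole L' := by
  have h0 : ({0} : Set ℂ) = f '' {0} := by simp
  rw [systole_eq_sInf_image, h, h0, ← Set.image_sdiff f.injective, Set.image_image]
  simp only [LinearIsometryEquiv.norm_map]
  exact systole_eq_sInf_image.symm

lemma exists_isMinimalVector {a b : ℂ} (h : covol a b ≠ 0) :
    ∃ u, IsMinimalVector (latticeOf a b) u := by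
  let comb : ℤ × ℤ → ℂ := fun p => p.1 * a + p.2 * b
  have comb_ne_zero {p : ℤ × ℤ} (hp : p ≠ 0) : comb p ≠ 0 := fun hp' =>
    hp (Prod.ext_iff.2 (eq_zero_of_intCast_mul_add_eq_zero h hp'))
  obtain ⟨p, ⟨hpa, hp0⟩, hmin⟩ := Set.exists_min_image ({p | ‖comb p‖ ≤ ‖a‖} \ {0})
    (‖comb ·‖) (finite_setOf_norm_intCast_mul_add_le h _).sdiff ⟨(1, 0), by simp [comb]⟩
  refine ⟨comb p, isMinimalVector_iff.2 ⟨mem_latticeOf.2 ⟨p.1, p.2, rfl⟩, comb_ne_zero hp0, ?_⟩⟩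
  intro v hv hv0
  obtain ⟨m, n, rfl⟩ := mem_latticeOf.1 hv
  rcases le_or_gt ‖comb (m, n)‖ ‖a‖ with hle | hlt
  · exact hmin (m, n) ⟨hle, fun h0 => hv0 (by simp_all [comb])⟩
  · exact hpa.trans hlt.le

lemma IsMinimalVector.isUnit_of_eq_intCast_mul {u : ℂ} (hu : IsMinimalVector L u) (hv : v ∈ L)
    {k : ℤ} (huv : u = k * v) : IsUnit k := by
  obtain ⟨-, hu0, hmin⟩ := isMinimalVector_iff.1 hu
  have hk0 : k ≠ 0 := by rintro rfl; simp [huv] at hu0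
  have hv0 : v ≠ 0 := by rintro rfl; simp [huv] at hu0
  have hle := hmin v hv hv0
  rw [huv, norm_mul, Complex.norm_intCast, mul_le_iff_le_one_left (norm_pos_iff.2 hv0)] at hle
  rw [Int.isUnit_iff_abs_eq]
  exact le_antisymm (by exact_mod_cast hle) (Int.one_le_abs hk0)

lemma IsMinimalVector.exists_latticeOf_eq {a b u : ℂ} (hu : IsMinimalVector (latticeOf a b) u) :
    ∃ w, latticeOf u w = latticeOf a b ∧ covol u w = covol a b := by
  obtain ⟨p, q, rfl⟩ := mem_latticeOf.1 hu.1
  have hcop : IsCoprime p q := by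
    obtain ⟨p', hp'⟩ := Int.gcd_dvd_left p q
    obtain ⟨q', hq'⟩ := Int.gcd_dvd_right p q
    have hpC : (p : ℂ) = (p.gcd q : ℤ) * p' := by exact_mod_cast hp'
    have hqC : (q : ℂ) = (p.gcd q : ℤ) * q' := by exact_mod_cast hq'
    have hunit := hu.isUnit_of_eq_intCast_mul (k := p.gcd q) (mem_latticeOf.2 ⟨p', q', rfl⟩)
      (by rw [hpC, hqC]; ring)
    rw [Int.isCoprime_iff_gcd_eq_one]
    exact_mod_cast Int.isUnit_iff_natAbs_eq.1 hunit
  obtain ⟨A, B, hAB⟩ := hcop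
  have hdet : p * A - q * -B = 1 := by linear_combination hAB
  refine ⟨(-B : ℤ) * a + (A : ℤ) * b, latticeOf_eq_of_isUnit_det rfl rfl (hdet ▸ isUnit_one), ?_⟩
  rw [covol_intCast_mul_add, hdet]
  simp

end Systole

lemma exists_abs_re_le_half (u τ : ℂ) :
    ∃ τ', |τ'.re| ≤ 1 / 2 ∧ τ'.im = τ.im ∧ latticeOf u (u * τ') = latticeOf u (u * τ) :=
  ⟨τ - round τ.re, by simpa using abs_sub_round τ.re, by simp,
    latticeOf_eq_of_isUnit_det (p := 1) (q := 0) (r := -round τ.re) (s := 1) (by simp)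
      (by push_cast; ring) (by simp)⟩

lemma exists_reduced_basis {a b : ℂ} (h : covol a b ≠ 0) :
    ∃ u τ : ℂ, latticeOf u (u * τ) = latticeOf a b ∧ IsMinimalVector (latticeOf a b) u ∧
      ‖u‖ ^ 2 * |τ.im| = covol a b ∧ |τ.re| ≤ 1 / 2 ∧ 1 ≤ ‖τ‖ := by
  obtain ⟨u, hu⟩ := exists_isMinimalVector h
  obtain ⟨w, hL, hcov⟩ := hu.exists_latticeOf_eq
  obtain ⟨-, hu0, hmin⟩ := isMinimalVector_iff.1 hu
  obtain ⟨τ, hre, him, hLτ⟩ := exists_abs_re_le_half u (w / u)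
  rw [mul_div_cancel₀ w hu0, hL] at hLτ
  have hcovτ : ‖u‖ ^ 2 * |τ.im| = covol a b := by
    rw [him, ← covol_mul_right, mul_div_cancel₀ w hu0, hcov]
  refine ⟨u, τ, hLτ, hu, hcovτ, hre, ?_⟩
  have huτ0 : u * τ ≠ 0 := fun h0 => h (by rw [← hcovτ, ← covol_mul_right, h0]; simp [covol])
  have hle := hmin (u * τ) (hLτ ▸ AddSubgroup.subset_closure (by simp)) huτ0
  rwa [norm_mul, le_mul_iff_one_le_right (norm_pos_iff.2 hu0)] at hle

lemma one_le_re_sq_add_im_sq {τ : ℂ} (hτ : 1 ≤ ‖τ‖) : 1 ≤ τ.re ^ 2 + τ.im ^ 2 := by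
  rw [sq, sq, ← Complex.normSq_apply, ← Complex.sq_norm]
  nlinarith

lemma three_div_four_le_im_sq {τ : ℂ} (hre : |τ.re| ≤ 1 / 2) (hτ : 1 ≤ ‖τ‖) :
    3 / 4 ≤ τ.im ^ 2 := by
  nlinarith [one_le_re_sq_add_im_sq hτ, sq_abs τ.re, abs_nonneg τ.re]

lemma c₀_pos : 0 < c₀ := Real.sqrt_pos.2 (by positivity)

lemma c₀_pow_four : c₀ ^ 4 = 4 / 3 := by
  rw [show c₀ ^ 4 = (c₀ ^ 2) ^ 2 by ring, c₀, Real.sq_sqrt (by positivity), div_pow,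
    Real.sq_sqrt (by norm_num)]
  norm_num

lemma norm_le_c₀_of_sq_mul_abs_im_eq_one {u τ : ℂ} (h : ‖u‖ ^ 2 * |τ.im| = 1)
    (him : 3 / 4 ≤ τ.im ^ 2) : ‖u‖ ≤ c₀ ∧ (‖u‖ = c₀ → τ.im ^ 2 = 3 / 4) := by
  have h4 : ‖u‖ ^ 4 * τ.im ^ 2 = 1 := by
    linear_combination (‖u‖ ^ 2 * |τ.im| + 1) * h - ‖u‖ ^ 4 * sq_abs τ.im
  refine ⟨(pow_le_pow_iff_left₀ (norm_nonneg u) c₀_pos.le (by norm_num : 4 ≠ 0)).1 ?_, ?_⟩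
  · rw [c₀_pow_four]; nlinarith [pow_nonneg (norm_nonneg u) 4]
  · rintro hu
    rw [hu, c₀_pow_four] at h4
    linarith

section Hexagonal

local notation "ω" => Complex.exp (Real.pi / 3 * Complex.I)

lemma exp_pi_div_three_mul_I_eq : ω = ⟨1 / 2, √3 / 2⟩ := by
  rw [show (Real.pi : ℂ) / 3 * I = ((Real.pi / 3 : ℝ) : ℂ) * I by push_cast; ring,
    Complex.exp_mul_I, ← Complex.ofReal_cos, ← Complex.ofReal_sin, Real.cos_pi_div_three,
    Real.sin_pi_div_three]
  apply Complex.ext <;> simp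

lemma normSq_intCast_add_mul_exp_pi_div_three_mul_I (m n : ℤ) :
    normSq ((m : ℂ) + n * ω) = ((m ^ 2 + m * n + n ^ 2 : ℤ) : ℝ) := by
  rw [exp_pi_div_three_mul_I_eq, Complex.normSq_apply]
  simp only [Complex.add_re, Complex.add_im, Complex.mul_re, Complex.mul_im, Complex.intCast_re,
    Complex.intCast_im]
  push_cast
  linear_combination ((n : ℝ) ^ 2 / 4) * Real.sq_sqrt (show (0 : ℝ) ≤ 3 by norm_num)

lemma one_le_norm_intCast_add_mul_exp_pi_div_three_mul_I {m n : ℤ}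
    (h : (m : ℂ) + n * ω ≠ 0) : 1 ≤ ‖(m : ℂ) + n * ω‖ := by
  have hsq := normSq_intCast_add_mul_exp_pi_div_three_mul_I m n
  rw [← Complex.sq_norm] at hsq
  have hpos : (0 : ℤ) < m ^ 2 + m * n + n ^ 2 := by
    exact_mod_cast hsq ▸ pow_pos (norm_pos_iff.2 h) 2
  have hone : (1 : ℝ) ≤ ‖(m : ℂ) + n * ω‖ ^ 2 := by rw [hsq]; exact_mod_cast hpos
  nlinarith [norm_nonneg ((m : ℂ) + n * ω)]

lemma systole_hexLattice : systole hexLattice = c₀ := by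
  have hc₀ : ‖(c₀ : ℂ)‖ = c₀ := by rw [Complex.norm_real, Real.norm_of_nonneg c₀_pos.le]
  refine hc₀ ▸ (isMinimalVector_iff.2 ⟨AddSubgroup.subset_closure (by simp),
    Complex.ofReal_ne_zero.2 c₀_pos.ne', fun v hv hv0 => ?_⟩).2.2.symm
  obtain ⟨m, n, rfl⟩ := mem_latticeOf.1 hv
  rw [show (m : ℂ) * c₀ + n * (c₀ * ω) = c₀ * (m + n * ω) by ring] at hv0 ⊢
  rw [norm_mul, hc₀]
  exact le_mul_of_one_le_right c₀_pos.le
    (one_le_norm_intCast_add_mul_exp_pi_div_three_mul_I (right_ne_zero_of_mul hv0))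

lemma systole_eq_c₀_of_isHexagonal {L : AddSubgroup ℂ} (h : IsHexagonal L) : systole L = c₀ :=
  let ⟨f, hf⟩ := h
  (systole_eq_of_coe_eq_image f hf).trans systole_hexLattice

lemma isHexagonal_latticeOf_mul_exp_pi_div_three_mul_I {u : ℂ} (hu : ‖u‖ = c₀) :
    IsHexagonal (latticeOf u (u * ω)) := by
  have hc₀ : (c₀ : ℂ) ≠ 0 := Complex.ofReal_ne_zero.2 c₀_pos.ne'
  have hz : ‖u / c₀‖ = 1 := by
    rw [norm_div, hu, Complex.norm_real, Real.norm_of_nonneg c₀_pos.le, div_self c₀_pos.ne']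
  let z : Circle := ⟨u / c₀, mem_sphere_zero_iff_norm.2 hz⟩
  refine ⟨rotation z, ?_⟩
  change _ = ((hexLattice.map (rotation z : ℂ →+ ℂ) : AddSubgroup ℂ) : Set ℂ)
  rw [hexLattice, latticeOf_map, AddMonoidHom.coe_coe, rotation_apply, rotation_apply, ← mul_assoc,
    show (z : ℂ) * c₀ = u from div_mul_cancel₀ u hc₀]

lemma exists_eq_intCast_add_mul_exp_pi_div_three_mul_I {τ : ℂ} (hre : |τ.re| ≤ 1 / 2)
    (hτ : 1 ≤ ‖τ‖) (him : τ.im ^ 2 = 3 / 4) : ∃ r s : ℤ, IsUnit s ∧ τ = r + s * ω := by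
  have hre2 : τ.re ^ 2 = (1 / 2) ^ 2 := by
    nlinarith [one_le_re_sq_add_im_sq hτ, sq_abs τ.re, abs_nonneg τ.re]
  have him2 : τ.im ^ 2 = (√3 / 2) ^ 2 := by
    rw [him, div_pow, Real.sq_sqrt (by norm_num)]; norm_num
  rw [exp_pi_div_three_mul_I_eq]
  rcases sq_eq_sq_iff_eq_or_eq_neg.1 hre2 with hr | hr <;>
    rcases sq_eq_sq_iff_eq_or_eq_neg.1 him2 with hi | hi
  · exact ⟨0, 1, isUnit_one, Complex.ext (by simp [hr]) (by simp [hi])⟩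
  · exact ⟨1, -1, isUnit_one.neg, Complex.ext (by simp [hr]; norm_num) (by simp [hi])⟩
  · exact ⟨-1, 1, isUnit_one, Complex.ext (by simp [hr]; norm_num) (by simp [hi])⟩
  · exact ⟨0, -1, isUnit_one.neg, Complex.ext (by simp [hr]) (by simp [hi])⟩

lemma isHexagonal_latticeOf_mul {u τ : ℂ} (hu : ‖u‖ = c₀) (hre : |τ.re| ≤ 1 / 2) (hτ : 1 ≤ ‖τ‖)
    (him : τ.im ^ 2 = 3 / 4) : IsHexagonal (latticeOf u (u * τ)) := by
  obtain ⟨r, s, hs, rfl⟩ := exists_eq_intCast_add_mul_exp_pi_div_three_mul_I hre hτ him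
  rw [latticeOf_eq_of_isUnit_det (a := u) (b := u * ω) (p := 1) (q := 0) (r := r) (s := s)
    (by simp) (by ring) (by simpa)]
  exact isHexagonal_latticeOf_mul_exp_pi_div_three_mul_I hu

end Hexagonal

/-- Every covolume-1 lattice in ℝ² has systole at most (2/√3)^{1/2}, with
equality if and only if it is the image of the rescaled hexagonal lattice
under an isometry of ℝ². -/
theorem systole_le_hexagonal (a b : ℂ) (hcov : covol a b = 1) :
    systole (latticeOf a b) ≤ c₀ ∧
      (systole (latticeOf a b) = c₀ ↔ IsHexagonal (latticeOf a b)) := by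
  obtain ⟨u, τ, hL, hu, hcovτ, hre, hτ⟩ := exists_reduced_basis (hcov ▸ one_ne_zero)
  rw [hcov] at hcovτ
  have hsys : systole (latticeOf a b) = ‖u‖ := hu.2.2.symm
  obtain ⟨hle, him⟩ := norm_le_c₀_of_sq_mul_abs_im_eq_one hcovτ (three_div_four_le_im_sq hre hτ)
  refine ⟨hsys ▸ hle, fun h => ?_, systole_eq_c₀_of_isHexagonal⟩
  rw [hsys] at h
  exact hL ▸ isHexagonal_latticeOf_mul h hre hτ (him h)
end

section
/- The systole of the hexagonal lattice ℤ + ℤe^{iπ/3} in ℂ equals 1, and it has exactly 6 minimal vectors: ±1, ±e^{iπ/3}, ±e^{2iπ/3}. -/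
open Complex

/-!
Writing `ω = e^{iπ/3} = 1/2 + (√3/2) i`, every lattice vector is `m + nω` with `m n : ℤ`, and
`|m + nω|² = m² + mn + n²`. Since `4(m² + mn + n²) = (2m + n)² + 3n²`, this integer is positive
unless `m = n = 0`, hence at least `1`, and it equals `1` exactly for the six pairs
`±(1, 0), ±(0, 1), ±(-1, 1)`, which give `±1, ±ω, ±(ω - 1)`, where `ω - 1 = ω² = e^{2iπ/3}`.
-/

theorem systole_eq_of_forall_norm_le {L : AddSubgroup ℂ} {v : ℂ} (hv : v ∈ L) (hv₀ : v ≠ 0)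
    (hmin : ∀ w ∈ L, w ≠ 0 → ‖v‖ ≤ ‖w‖) : systole L = ‖v‖ := by
  refine le_antisymm (csInf_le ⟨0, ?_⟩ ⟨v, hv, hv₀, rfl⟩) (le_csInf ⟨_, v, hv, hv₀, rfl⟩ ?_)
  · rintro r ⟨w, -, -, rfl⟩
    exact norm_nonneg w
  · rintro r ⟨w, hw, hw₀, rfl⟩
    exact hmin w hw hw₀

theorem mem_latticeOf_iff {a b v : ℂ} : v ∈ latticeOf a b ↔ ∃ m n : ℤ, m * a + n * b = v := by
  simp only [latticeOf, AddSubgroup.mem_closure_pair, zsmul_eq_mul]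

namespace Int

variable {m n : ℤ}

theorem sq_add_mul_add_sq_pos (h : m ≠ 0 ∨ n ≠ 0) : 0 < m ^ 2 + m * n + n ^ 2 := by
  rcases h with h | h
  · nlinarith [sq_nonneg (m + 2 * n), sq_pos_of_ne_zero h]
  · nlinarith [sq_nonneg (2 * m + n), sq_pos_of_ne_zero h]

theorem sq_add_mul_add_sq_eq_one_iff :
    m ^ 2 + m * n + n ^ 2 = 1 ↔
      (m = 1 ∧ n = 0) ∨ (m = -1 ∧ n = 0) ∨ (m = 0 ∧ n = 1) ∨ (m = 0 ∧ n = -1) ∨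
        (m = -1 ∧ n = 1) ∨ (m = 1 ∧ n = -1) := by
  constructor
  · intro h
    have hm : |m| ≤ 1 := (sq_le_one_iff_abs_le_one m).1 (by nlinarith [sq_nonneg (m + 2 * n)])
    have hn : |n| ≤ 1 := (sq_le_one_iff_abs_le_one n).1 (by nlinarith [sq_nonneg (2 * m + n)])
    obtain ⟨hm₁, hm₂⟩ := abs_le.1 hm
    obtain ⟨hn₁, hn₂⟩ := abs_le.1 hn
    interval_cases m <;> interval_cases n <;> simp_all
  · rintro (⟨rfl, rfl⟩ | ⟨rfl, rfl⟩ | ⟨rfl, rfl⟩ | ⟨rfl, rfl⟩ | ⟨rfl, rfl⟩ | ⟨rfl, rfl⟩) <;> norm_num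

end Int

namespace HexagonalLattice

noncomputable def ω : ℂ := exp (Real.pi / 3 * I)

theorem ω_eq : ω = ⟨1 / 2, √3 / 2⟩ := by
  have h : (Real.pi / 3 * I : ℂ) = (Real.pi / 3 : ℝ) * I := by push_cast; ring
  apply Complex.ext <;> simp only [ω, h, exp_ofReal_mul_I_re, exp_ofReal_mul_I_im,
    Real.cos_pi_div_three, Real.sin_pi_div_three]

theorem ω_sq : ω ^ 2 = ω - 1 := by
  have h3 : √3 ^ 2 = 3 := Real.sq_sqrt (by norm_num)
  rw [ω_eq]
  apply Complex.ext <;> simp only [sq, mul_re, mul_im, sub_re, sub_im, one_re, one_im] <;>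
    nlinarith

theorem exp_two_pi_div_three_mul_I : exp (2 * Real.pi / 3 * I) = ω - 1 := by
  rw [← ω_sq, ω, ← exp_nat_mul]
  push_cast
  ring_nf

theorem normSq_intCast_add_intCast_mul_ω (m n : ℤ) :
    normSq (m + n * ω) = ((m ^ 2 + m * n + n ^ 2 : ℤ) : ℝ) := by
  have h3 : √3 ^ 2 = 3 := Real.sq_sqrt (by norm_num)
  simp only [ω_eq, normSq_apply, add_re, add_im, mul_re, mul_im, intCast_re, intCast_im]
  push_cast
  nlinarith

theorem one_le_norm_of_mem_latticeOf_one_ω {v : ℂ} (hv : v ∈ latticeOf 1 ω) (hv₀ : v ≠ 0) :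
    1 ≤ ‖v‖ := by
  obtain ⟨m, n, rfl⟩ := mem_latticeOf_iff.1 hv
  rw [mul_one] at hv₀ ⊢
  have hmn : m ≠ 0 ∨ n ≠ 0 := by
    contrapose! hv₀
    simp [hv₀.1, hv₀.2]
  rw [← one_le_sq_iff₀ (norm_nonneg _), ← normSq_eq_norm_sq, normSq_intCast_add_intCast_mul_ω]
  exact_mod_cast Int.sq_add_mul_add_sq_pos hmn

theorem norm_intCast_add_intCast_mul_ω_eq_one_iff {m n : ℤ} :
    ‖(m : ℂ) + n * ω‖ = 1 ↔ m ^ 2 + m * n + n ^ 2 = 1 := by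
  rw [← pow_eq_one_iff_of_nonneg (norm_nonneg _) two_ne_zero, ← normSq_eq_norm_sq,
    normSq_intCast_add_intCast_mul_ω]
  norm_cast

theorem systole_latticeOf_one_ω : systole (latticeOf 1 ω) = 1 := by
  have h₁ : (1 : ℂ) ∈ latticeOf 1 ω := AddSubgroup.subset_closure (by simp)
  simpa using systole_eq_of_forall_norm_le h₁ one_ne_zero fun w hw hw₀ ↦ by
    simpa using one_le_norm_of_mem_latticeOf_one_ω hw hw₀

theorem isMinimalVector_latticeOf_one_ω_iff {v : ℂ} :
    IsMinimalVector (latticeOf 1 ω) v ↔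
      ∃ m n : ℤ, m ^ 2 + m * n + n ^ 2 = 1 ∧ (m : ℂ) + n * ω = v := by
  simp only [IsMinimalVector, systole_latticeOf_one_ω, mem_latticeOf_iff, mul_one]
  constructor
  · rintro ⟨⟨m, n, rfl⟩, -, hv⟩
    exact ⟨m, n, norm_intCast_add_intCast_mul_ω_eq_one_iff.1 hv, rfl⟩
  · rintro ⟨m, n, h, rfl⟩
    have hv := norm_intCast_add_intCast_mul_ω_eq_one_iff.2 h
    exact ⟨⟨m, n, rfl⟩, norm_ne_zero_iff.1 (hv ▸ one_ne_zero), hv⟩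

end HexagonalLattice

open HexagonalLattice

/-- The (unrescaled) hexagonal lattice ℤ + ℤe^{iπ/3} has systole 1, and its
minimal vectors are exactly ±1, ±e^{iπ/3}, ±e^{2iπ/3}. -/
theorem hexagonal_systole_and_minimal_vectors :
    systole (latticeOf 1 (Complex.exp (Real.pi / 3 * Complex.I))) = 1 ∧
      {v : ℂ | IsMinimalVector (latticeOf 1 (Complex.exp (Real.pi / 3 * Complex.I))) v} =
        {1, -1, Complex.exp (Real.pi / 3 * Complex.I),
          -Complex.exp (Real.pi / 3 * Complex.I),
          Complex.exp (2 * Real.pi / 3 * Complex.I),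
          -Complex.exp (2 * Real.pi / 3 * Complex.I)} := by
  rw [show exp (Real.pi / 3 * I) = ω from rfl, exp_two_pi_div_three_mul_I]
  refine ⟨systole_latticeOf_one_ω, Set.ext fun v ↦ ?_⟩
  simp only [Set.mem_ofPred_eq, Set.mem_insert_iff, Set.mem_singleton_iff,
    isMinimalVector_latticeOf_one_ω_iff, Int.sq_add_mul_add_sq_eq_one_iff]
  constructor
  · rintro ⟨m, n, h, rfl⟩
    rcases h with ⟨rfl, rfl⟩ | ⟨rfl, rfl⟩ | ⟨rfl, rfl⟩ | ⟨rfl, rfl⟩ | ⟨rfl, rfl⟩ | ⟨rfl, rfl⟩ <;>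
      simp [neg_add_eq_sub, ← sub_eq_add_neg]
  · rintro (rfl | rfl | rfl | rfl | rfl | rfl)
    exacts [⟨1, 0, by simp⟩, ⟨-1, 0, by simp⟩, ⟨0, 1, by simp⟩, ⟨0, -1, by simp⟩,
      ⟨-1, 1, by simp [neg_add_eq_sub]⟩, ⟨1, -1, by simp [← sub_eq_add_neg]⟩]
end
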